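/- Let Q be a finite (left) quasifield with q elements, let d ≥ 1 be an integer, and let γ ∈ Q. Let N be the q^{d+1} × q^{d+1} 0-1 matrix over ℝ, indexed by Q^{d+1} × Q^{d+1}, whose (x,y)-entry is 1 exactly when x is adjacent to y in DP_Q(d,γ), let M be the block matrix [[0, N],[Nᵀ, 0]], let J be the q^{d+1} × q^{d+1} all-ones matrix, and let P = [[0, J],[J, 0]]. Then M³ = q^d·M + q^{d−1}·(q^d − 1)·P. -/

import Mathlib

open Matrix

/-- A finite (left) quasifield. -/
class Quasifield (Q : Type*) extends AddCommGroup Q, Mul Q, One Q where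
  one_ne_zero : (1 : Q) ≠ 0
  one_mul : ∀ a : Q, 1 * a = a
  mul_one : ∀ a : Q, a * 1 = a
  zero_mul : ∀ a : Q, 0 * a = 0
  mul_zero : ∀ a : Q, a * 0 = 0
  mul_ne_zero : ∀ a b : Q, a ≠ 0 → b ≠ 0 → a * b ≠ 0
  existsUnique_mul_left : ∀ a b : Q, a ≠ 0 → b ≠ 0 → ∃! x : Q, a * x = b
  existsUnique_mul_right : ∀ a b : Q, a ≠ 0 → b ≠ 0 → ∃! y : Q, y * a = b
  left_distrib : ∀ a b c : Q, a * (b + c) = a * b + a * c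
  existsUnique_affine : ∀ a b c : Q, a ≠ b → ∃! x : Q, a * x = b * x + c

/-- The kernel of a quasifield. -/
def Quasifield.kernel (Q : Type*) [Quasifield Q] : Set Q :=
  {k | (∀ x y : Q, (x + y) * k = x * k + y * k) ∧ ∀ x y : Q, (x * y) * k = x * (y * k)}

/-- The adjacency relation of the product graph `DP_Q(d,γ)`:
`x ∈ X = Q^{d+1}` is adjacent to `y ∈ Y = Q^{d+1}` iff
`x_{d+1} + γ = x₁·y₁ + ⋯ + x_d·y_d + y_{d+1}`. -/
def DPAdj {Q : Type*} [Quasifield Q] (d : ℕ) (γ : Q) (x y : Fin (d + 1) → Q) : Prop :=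
  x (Fin.last d) + γ = (∑ i : Fin d, x i.castSucc * y i.castSucc) + y (Fin.last d)

open scoped Classical in
/-- The `X × Y` block `N` of the adjacency matrix of `DP_Q(d,γ)`. -/
noncomputable def DPBlock (Q : Type*) [Quasifield Q] [Fintype Q] (d : ℕ) (γ : Q) :
    Matrix (Fin (d + 1) → Q) (Fin (d + 1) → Q) ℝ :=
  Matrix.of fun x y => if DPAdj d γ x y then 1 else 0

/-!
Write `t_y(u) = u₁y₁ + ⋯ + u_d y_d + y_{d+1}`. A vertex `x` is adjacent to `y` iff
`x_{d+1} = t_y(x₁, …, x_d) - γ`, so the common neighbours of `y, y'` correspond to the solutions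
`u ∈ Q^d` of `∑ uᵢ (yᵢ - y'ᵢ) = y'_{d+1} - y_{d+1}` (left distributivity). If `y` and `y'` agree
in the first `d` coordinates there are `q^d` or `0` of them according as `y = y'` or not;
otherwise some `yⱼ - y'ⱼ ≠ 0`, right multiplication by it is bijective, and there are `q^{d-1}`.
Thus `NᵀN = q^d I + q^{d-1} (J - S)`, where `S` records agreement in the first `d` coordinates.
Each vertex has `q^d` neighbours, exactly one in each `S`-class, so `NJ = q^d J` and `NS = J`;
hence `N Nᵀ N = q^d N + q^{d-1}(q^d - 1) J`, and `M³` is made of the blocks `N Nᵀ N` and its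
transpose.
-/

open Finset

theorem card_filter_sum_apply_eq_of_bijective {ι R A : Type*} [Fintype ι] [DecidableEq ι]
    [Fintype R] [AddCommGroup A] [DecidableEq A] (g : ι → R → A) {j : ι}
    (hj : Function.Bijective (g j)) (c : A) :
    #{f : ι → R | ∑ i, g i (f i) = c} = Fintype.card R ^ (Fintype.card ι - 1) := by
  set e := Equiv.funSplitAt j R
  have hsplit : ∀ a (h : {i // i ≠ j} → R),
      ∑ i, g i (e.symm (a, h) i) = g j a + ∑ i : {i // i ≠ j}, g i (h i) := by
    intro a h
    rw [Fintype.sum_eq_add_sum_subtype_ne _ j]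
    simp only [e, Equiv.funSplitAt_symm_apply, dif_pos]
    congr 1
    exact sum_congr rfl fun i _ => by rw [dif_neg i.2]
  have hfiber : ∀ t : A, #{a | g j a = t} = 1 := by
    intro t
    obtain ⟨a, rfl, ha⟩ := hj.existsUnique t
    exact card_eq_one.2 ⟨a, by ext a'; simpa using ⟨ha a', fun h => h ▸ rfl⟩⟩
  calc #{f : ι → R | ∑ i, g i (f i) = c}
      = ∑ h : {i // i ≠ j} → R, #{a | g j a = c - ∑ i : {i // i ≠ j}, g i (h i)} := by
        simp only [card_filter, ← e.symm.sum_comp, Fintype.sum_prod_type, hsplit,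
          eq_sub_iff_add_eq]
        exact sum_comm
    _ = Fintype.card R ^ (Fintype.card ι - 1) := by simp [hfiber]

theorem card_filter_last_eq_and_init {α : Type*} [Fintype α] [DecidableEq α] {d : ℕ}
    (f : (Fin d → α) → α) (p : (Fin d → α) → Prop) [DecidablePred p] :
    #{x : Fin (d + 1) → α | x (Fin.last d) = f (Fin.init x) ∧ p (Fin.init x)} = #{u | p u} :=
  card_nbij' Fin.init (fun u => Fin.snoc u (f u))
    (fun x hx => by simp_all)
    (fun u hu => by simp_all [Fin.init_snoc])
    (fun x hx => by
      change Fin.snoc _ _ = x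
      rw [← (mem_filter.1 hx).2.1, Fin.snoc_init_self])
    (fun u _ => Fin.init_snoc _ _)

namespace Quasifield

variable {Q : Type*} [Quasifield Q]

theorem mul_sub (a b c : Q) : a * (b - c) = a * b - a * c :=
  (AddMonoidHom.mk' (a * ·) (left_distrib a)).map_sub b c

theorem mul_left_injective₀ {b : Q} (hb : b ≠ 0) : Function.Injective (· * b) := by
  intro a a' h
  by_contra hne
  -- both `0` and `b` solve `a * x = a' * x + 0`
  obtain ⟨x, -, hx⟩ := existsUnique_affine a a' 0 hne
  exact hb ((hx b (by simpa using h)).trans (hx 0 (by simp [mul_zero])).symm)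

theorem card_filter_sum_mul_eq_of_ne_zero [Fintype Q] [DecidableEq Q] {n : ℕ} {b : Fin n → Q}
    (hb : b ≠ 0) (c : Q) :
    #{u : Fin n → Q | ∑ i, u i * b i = c} = Fintype.card Q ^ (n - 1) := by
  obtain ⟨j, hj⟩ := Function.ne_iff.1 hb
  simpa using card_filter_sum_apply_eq_of_bijective (fun i a => a * b i)
    (Finite.injective_iff_bijective.1 (mul_left_injective₀ hj)) c

end Quasifield

section ProductGraph

variable {Q : Type*} [Quasifield Q] {d : ℕ} {γ : Q}

instance [DecidableEq Q] : DecidableRel (DPAdj d γ) := fun _ _ => decEq _ _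

theorem dpAdj_iff_last_left {x y : Fin (d + 1) → Q} :
    DPAdj d γ x y ↔ x (Fin.last d) = ∑ i, Fin.init x i * Fin.init y i + y (Fin.last d) - γ :=
  eq_sub_iff_add_eq.symm

theorem dpAdj_iff_last_right {x y : Fin (d + 1) → Q} :
    DPAdj d γ x y ↔ y (Fin.last d) = x (Fin.last d) + γ - ∑ i, x i.castSucc * Fin.init y i := by
  rw [eq_sub_iff_add_eq', eq_comm]
  rfl

variable [Fintype Q] [DecidableEq Q]

theorem card_filter_dpAdj_and_dpAdj (y y' : Fin (d + 1) → Q) :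
    #{x | DPAdj d γ x y ∧ DPAdj d γ x y'} =
      #{u : Fin d → Q |
        ∑ i, u i * (Fin.init y i - Fin.init y' i) = y' (Fin.last d) - y (Fin.last d)} := by
  set t := fun (z : Fin (d + 1) → Q) (u : Fin d → Q) =>
    ∑ i, u i * Fin.init z i + z (Fin.last d) - γ
  have hadj : ∀ x, DPAdj d γ x y ∧ DPAdj d γ x y' ↔
      x (Fin.last d) = t y (Fin.init x) ∧ t y (Fin.init x) = t y' (Fin.init x) := by
    intro x
    simp only [dpAdj_iff_last_left, t]
    exact ⟨fun h => ⟨h.1, h.1 ▸ h.2⟩, fun h => ⟨h.1, h.1.trans h.2⟩⟩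
  rw [filter_congr fun x _ => hadj x,
    card_filter_last_eq_and_init (t y) fun u => t y u = t y' u]
  refine congrArg card (filter_congr fun u _ => ?_)
  simp only [t, Quasifield.mul_sub, sum_sub_distrib, sub_left_inj, sub_eq_sub_iff_add_eq_add,
    add_comm (y' (Fin.last d))]

theorem card_filter_dpAdj_and_init_eq (x : Fin (d + 1) → Q) (v : Fin d → Q) :
    #{y | DPAdj d γ x y ∧ Fin.init y = v} = 1 := by
  rw [filter_congr fun y _ => and_congr_left' dpAdj_iff_last_right,
    card_filter_last_eq_and_init (fun u => x (Fin.last d) + γ - ∑ i, x i.castSucc * u i) (· = v)]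
  exact card_eq_one.2 ⟨v, by ext; simp⟩

theorem card_filter_dpAdj (x : Fin (d + 1) → Q) :
    #{y | DPAdj d γ x y} = Fintype.card Q ^ d := by
  rw [filter_congr fun y _ => dpAdj_iff_last_right.trans (and_iff_left trivial).symm,
    card_filter_last_eq_and_init (fun u => x (Fin.last d) + γ - ∑ i, x i.castSucc * u i)
      fun _ => True]
  simp

end ProductGraph

open scoped Classical in
noncomputable def sameInitMatrix (Q : Type*) (d : ℕ) :
    Matrix (Fin (d + 1) → Q) (Fin (d + 1) → Q) ℝ :=
  of fun y y' => if Fin.init y = Fin.init y' then 1 else 0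

section BlockIdentities

variable {Q : Type*} [Quasifield Q] [Fintype Q] [DecidableEq Q] (d : ℕ) (γ : Q)

theorem transpose_dpBlock_mul_dpBlock :
    (DPBlock Q d γ)ᵀ * DPBlock Q d γ =
      (Fintype.card Q : ℝ) ^ d • 1 +
        (Fintype.card Q : ℝ) ^ (d - 1) • (of (fun _ _ => 1) - sameInitMatrix Q d) := by
  classical
  ext y y'
  have hentry : ((DPBlock Q d γ)ᵀ * DPBlock Q d γ) y y' =
      #{x | DPAdj d γ x y ∧ DPAdj d γ x y'} := by
    rw [natCast_card_filter]
    simp only [mul_apply, transpose_apply, DPBlock, of_apply, ite_zero_mul_ite_zero, mul_one]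
  rw [hentry, card_filter_dpAdj_and_dpAdj]
  simp only [Matrix.add_apply, Matrix.smul_apply, one_apply, Matrix.sub_apply, of_apply,
    sameInitMatrix]
  by_cases hinit : Fin.init y = Fin.init y'
  · simp only [hinit, sub_self, Quasifield.mul_zero, sum_const_zero]
    by_cases hyy : y = y'
    · simp [hyy]
    · have hlast : y (Fin.last d) ≠ y' (Fin.last d) := fun h =>
        hyy (by rw [← Fin.snoc_init_self y, ← Fin.snoc_init_self y', hinit, h])
      simp [hyy, eq_comm, sub_eq_zero, hlast]
  · have hb : (fun i => Fin.init y i - Fin.init y' i) ≠ 0 := by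
      simpa [funext_iff, sub_eq_zero] using hinit
    rw [Quasifield.card_filter_sum_mul_eq_of_ne_zero hb]
    simp [hinit, ne_of_apply_ne Fin.init hinit]

theorem dpBlock_mul_ones :
    DPBlock Q d γ * of (fun _ _ => 1) = (Fintype.card Q : ℝ) ^ d • of (fun _ _ => 1) := by
  ext x y
  have hentry :
      (DPBlock Q d γ * of fun _ _ => 1 : Matrix _ _ ℝ) x y = #{y' | DPAdj d γ x y'} := by
    rw [natCast_card_filter]
    simp only [mul_apply, DPBlock, of_apply, mul_one]
    congr!
  simp [hentry, card_filter_dpAdj]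

theorem dpBlock_mul_sameInitMatrix : DPBlock Q d γ * sameInitMatrix Q d = of fun _ _ => 1 := by
  ext x y
  have hentry : (DPBlock Q d γ * sameInitMatrix Q d) x y =
      #{y' | DPAdj d γ x y' ∧ Fin.init y' = Fin.init y} := by
    rw [natCast_card_filter]
    simp only [mul_apply, DPBlock, sameInitMatrix, of_apply, ite_zero_mul_ite_zero, mul_one]
  simp [hentry, card_filter_dpAdj_and_init_eq]

end BlockIdentities

theorem dpBlock_mul_transpose_mul_dpBlock {Q : Type*} [Quasifield Q] [Fintype Q] (d : ℕ) (γ : Q) :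
    DPBlock Q d γ * (DPBlock Q d γ)ᵀ * DPBlock Q d γ =
      (Fintype.card Q : ℝ) ^ d • DPBlock Q d γ +
        ((Fintype.card Q : ℝ) ^ (d - 1) * ((Fintype.card Q : ℝ) ^ d - 1)) • of fun _ _ => 1 := by
  classical
  rw [Matrix.mul_assoc, transpose_dpBlock_mul_dpBlock, Matrix.mul_add, Matrix.mul_smul,
    Matrix.mul_one, Matrix.mul_smul, Matrix.mul_sub, dpBlock_mul_ones,
    dpBlock_mul_sameInitMatrix]
  module

theorem Matrix.fromBlocks_zero_pow_three {m n α : Type*} [Fintype m] [Fintype n]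
    [DecidableEq m] [DecidableEq n] [Semiring α] (B : Matrix m n α) (C : Matrix n m α) :
    fromBlocks 0 B C 0 ^ 3 = fromBlocks 0 (B * C * B) (C * B * C) 0 := by
  simp [pow_succ, fromBlocks_multiply]

theorem stmt_17_general {Q : Type*} [Quasifield Q] [Fintype Q] [DecidableEq Q] (d : ℕ) (γ : Q) :
    (Matrix.fromBlocks 0 (DPBlock Q d γ) (DPBlock Q d γ)ᵀ 0) ^ 3 =
      (Fintype.card Q : ℝ) ^ d •
        Matrix.fromBlocks 0 (DPBlock Q d γ) (DPBlock Q d γ)ᵀ 0 +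
      ((Fintype.card Q : ℝ) ^ (d - 1) * ((Fintype.card Q : ℝ) ^ d - 1)) •
        Matrix.fromBlocks 0 (Matrix.of fun _ _ => (1 : ℝ)) (Matrix.of fun _ _ => (1 : ℝ)) 0 := by
  have hN := dpBlock_mul_transpose_mul_dpBlock d γ
  have hNt : (DPBlock Q d γ)ᵀ * DPBlock Q d γ * (DPBlock Q d γ)ᵀ =
      (Fintype.card Q : ℝ) ^ d • (DPBlock Q d γ)ᵀ +
        ((Fintype.card Q : ℝ) ^ (d - 1) * ((Fintype.card Q : ℝ) ^ d - 1)) • of fun _ _ => 1 := by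
    have h := congrArg transpose hN
    simp only [transpose_mul, transpose_add, transpose_smul, transpose_transpose,
      Matrix.mul_assoc] at h ⊢
    exact h
  rw [fromBlocks_zero_pow_three, hN, hNt, fromBlocks_smul, fromBlocks_smul, fromBlocks_add]
  simp

/-- Lemma 4.2, key identity: if `M = [[0,N],[Nᵀ,0]]` is the adjacency matrix of
`DP_Q(d,γ)` and `P = [[0,J],[J,0]]` with `J` the all-ones matrix, then
`M³ = q^d·M + q^{d-1}·(q^d - 1)·P`. -/
theorem stmt_17 {Q : Type*} [Quasifield Q] [Fintype Q] [DecidableEq Q] (d : ℕ) (hd : 1 ≤ d) (γ : Q) :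
    (Matrix.fromBlocks 0 (DPBlock Q d γ) (DPBlock Q d γ)ᵀ 0) ^ 3 =
      (Fintype.card Q : ℝ) ^ d •
        Matrix.fromBlocks 0 (DPBlock Q d γ) (DPBlock Q d γ)ᵀ 0 +
      ((Fintype.card Q : ℝ) ^ (d - 1) * ((Fintype.card Q : ℝ) ^ d - 1)) •
        Matrix.fromBlocks 0 (Matrix.of fun _ _ => (1 : ℝ)) (Matrix.of fun _ _ => (1 : ℝ)) 0 :=
  stmt_17_general d γ
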